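/- arXiv:1609.00978 — 5 statements merged into one kernel-verified Lean document; each statement's English description precedes it below -/
import Mathlib

section
/- For any real numbers μ₁,...,μ_M with μ_i ≥ 0, defining the softmax weight w_i(x) = exp(-(x-μ_i)²/2) / Σ_{j=1}^M exp(-(x-μ_j)²/2), we have min_{x ∈ [1,2]} w_i(x) ≥ (1/(M e²)) · max_{x ∈ (-∞, 0]} w_i(x). -/
open Real Finset

/-- For centers `μ₁,...,μ_M` with `μ i ≥ 0`, the Gaussian membership
weight `w_i(x) = exp(-(x-μᵢ)²/2) / ∑ⱼ exp(-(x-μⱼ)²/2)` satisfies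
`min_{x ∈ [1,2]} w_i(x) ≥ (1/(M e²)) · max_{x ≤ 0} w_i(x)`, stated pointwise. -/
theorem stmt_0 (M : ℕ) (hM : 1 ≤ M) (μ : Fin M → ℝ) (i : Fin M) (hμi : 0 ≤ μ i)
    (w : ℝ → ℝ)
    (hw : ∀ x : ℝ, w x =
      Real.exp (-(x - μ i) ^ 2 / 2) / ∑ j : Fin M, Real.exp (-(x - μ j) ^ 2 / 2)) :
    ∀ x ∈ Set.Icc (1 : ℝ) 2, ∀ x' ∈ Set.Iic (0 : ℝ),
      w x ≥ (1 / (M * Real.exp 2)) * w x' := by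
  intro x hx x' hx'
  obtain ⟨hx1, hx2⟩ := hx
  have hx'0 : x' ≤ 0 := hx'
  rw [hw x, hw x']
  set S := ∑ j : Fin M, Real.exp (-(x - μ j) ^ 2 / 2) with hS
  set T := ∑ j : Fin M, Real.exp (-(x' - μ j) ^ 2 / 2) with hT
  have hSpos : 0 < S := Finset.sum_pos (fun j _ => Real.exp_pos _) ⟨i, Finset.mem_univ i⟩
  have hTpos : 0 < T := Finset.sum_pos (fun j _ => Real.exp_pos _) ⟨i, Finset.mem_univ i⟩
  have hM0 : (0:ℝ) < M := by exact_mod_cast Nat.lt_of_lt_of_le Nat.zero_lt_one hM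
  have perj : ∀ j : Fin M,
      Real.exp (-(x' - μ i) ^ 2 / 2) * Real.exp (-(x - μ j) ^ 2 / 2)
        ≤ Real.exp 2 * (Real.exp (-(x - μ i) ^ 2 / 2) * T) := by
    intro j
    rcases le_or_gt (μ j) (μ i) with hji | hji
    · have hBj : Real.exp (-(x' - μ j) ^ 2 / 2) ≤ T := by
        exact Finset.single_le_sum (f := fun k : Fin M => Real.exp (-(x' - μ k) ^ 2 / 2))
          (fun k _ => (Real.exp_pos _).le) (Finset.mem_univ j)
      have hstep : Real.exp (-(x' - μ i) ^ 2 / 2) * Real.exp (-(x - μ j) ^ 2 / 2)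
          ≤ Real.exp 2 * (Real.exp (-(x - μ i) ^ 2 / 2) * Real.exp (-(x' - μ j) ^ 2 / 2)) := by
        rw [← Real.exp_add, ← Real.exp_add, ← Real.exp_add, Real.exp_le_exp]
        nlinarith [mul_nonneg (sub_nonneg.2 hji) (by linarith : (0:ℝ) ≤ x - x')]
      calc Real.exp (-(x' - μ i) ^ 2 / 2) * Real.exp (-(x - μ j) ^ 2 / 2)
          ≤ Real.exp 2 * (Real.exp (-(x - μ i) ^ 2 / 2) * Real.exp (-(x' - μ j) ^ 2 / 2)) := hstep
        _ ≤ Real.exp 2 * (Real.exp (-(x - μ i) ^ 2 / 2) * T) := by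
            apply mul_le_mul_of_nonneg_left _ (Real.exp_pos 2).le
            exact mul_le_mul_of_nonneg_left hBj (Real.exp_pos _).le
    · have hBi : Real.exp (-(x' - μ i) ^ 2 / 2) ≤ T := by
        exact Finset.single_le_sum (f := fun k : Fin M => Real.exp (-(x' - μ k) ^ 2 / 2))
          (fun k _ => (Real.exp_pos _).le) (Finset.mem_univ i)
      have hstep : Real.exp (-(x - μ j) ^ 2 / 2) ≤ Real.exp 2 * Real.exp (-(x - μ i) ^ 2 / 2) := by
        rw [← Real.exp_add, Real.exp_le_exp]
        nlinarith [sq_nonneg (μ j - μ i - 2), mul_nonneg (sub_nonneg.2 hji.le) (by linarith : (0:ℝ) ≤ 2 - x), mul_nonneg (sub_nonneg.2 hji.le) hμi]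
      calc Real.exp (-(x' - μ i) ^ 2 / 2) * Real.exp (-(x - μ j) ^ 2 / 2)
          ≤ Real.exp (-(x' - μ i) ^ 2 / 2) * (Real.exp 2 * Real.exp (-(x - μ i) ^ 2 / 2)) :=
            mul_le_mul_of_nonneg_left hstep (Real.exp_pos _).le
        _ = Real.exp 2 * (Real.exp (-(x - μ i) ^ 2 / 2) * Real.exp (-(x' - μ i) ^ 2 / 2)) := by ring
        _ ≤ Real.exp 2 * (Real.exp (-(x - μ i) ^ 2 / 2) * T) := by
            apply mul_le_mul_of_nonneg_left _ (Real.exp_pos 2).le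
            exact mul_le_mul_of_nonneg_left hBi (Real.exp_pos _).le
  have key : Real.exp (-(x' - μ i) ^ 2 / 2) * S
      ≤ (M : ℝ) * Real.exp 2 * (Real.exp (-(x - μ i) ^ 2 / 2) * T) := by
    calc Real.exp (-(x' - μ i) ^ 2 / 2) * S
        = ∑ j : Fin M, Real.exp (-(x' - μ i) ^ 2 / 2) * Real.exp (-(x - μ j) ^ 2 / 2) := by
          rw [hS, Finset.mul_sum]
      _ ≤ ∑ _j : Fin M, Real.exp 2 * (Real.exp (-(x - μ i) ^ 2 / 2) * T) :=
          Finset.sum_le_sum (fun j _ => perj j)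
      _ = (M : ℝ) * Real.exp 2 * (Real.exp (-(x - μ i) ^ 2 / 2) * T) := by
          rw [Finset.sum_const, Finset.card_univ, Fintype.card_fin, nsmul_eq_mul]; ring
  rw [ge_iff_le]
  have heq : (1 / ((M : ℝ) * Real.exp 2)) * (Real.exp (-(x' - μ i) ^ 2 / 2) / T)
      = Real.exp (-(x' - μ i) ^ 2 / 2) / ((M : ℝ) * Real.exp 2 * T) := by
    field_simp
  rw [heq, div_le_div_iff₀ (by positivity) hSpos]
  nlinarith [key]
end

section
/- Let i ≠ j and define A_ij(x) = 1/(M-1) + exp((μ_i - μ_j)(μ_i + μ_j - 2x)/2). If μ_i > 2, then for any x ∈ [1,2] and any x' ∈ (-∞, 0], A_ij(x) ≤ M · A_ij(x'). -/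
open Real

/-- with `A_ij(x) = 1/(M-1) + exp((μᵢ-μⱼ)(μᵢ+μⱼ-2x)/2)` and `μᵢ > 2`,
for any `x ∈ [1,2]` and `x' ≤ 0` we have `A_ij(x) ≤ M · A_ij(x')`. -/
theorem stmt_1 (M : ℕ) (hM : 2 ≤ M) (μ : Fin M → ℝ) (i j : Fin M) (hij : i ≠ j)
    (hμi : 2 < μ i)
    (A : ℝ → ℝ)
    (hA : ∀ x : ℝ, A x = 1 / (M - 1 : ℝ) +
      Real.exp ((μ i - μ j) * (μ i + μ j - 2 * x) / 2)) :
    ∀ x ∈ Set.Icc (1 : ℝ) 2, ∀ x' ∈ Set.Iic (0 : ℝ), A x ≤ M * A x' := by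
  intro x hx x' hx'
  obtain ⟨hx1, hx2⟩ := hx
  have hx'0 : x' ≤ 0 := hx'
  have hM1 : (1 : ℝ) ≤ (M : ℝ) - 1 := by
    have : (2 : ℝ) ≤ (M : ℝ) := by exact_mod_cast hM
    linarith
  have hMpos : (0 : ℝ) < (M : ℝ) - 1 := by linarith
  have hinvpos : (0 : ℝ) < 1 / ((M : ℝ) - 1) := by positivity
  rw [hA x, hA x']
  rcases le_or_gt (μ j) (μ i) with hc | hc
  · -- μ i - μ j ≥ 0, exponent monotone
    have hcle : (0 : ℝ) ≤ μ i - μ j := by linarith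
    have hexp : (μ i - μ j) * (μ i + μ j - 2 * x) / 2 ≤
        (μ i - μ j) * (μ i + μ j - 2 * x') / 2 := by
      have : μ i + μ j - 2 * x ≤ μ i + μ j - 2 * x' := by linarith
      have := mul_le_mul_of_nonneg_left this hcle
      linarith
    have h1 : 1 / ((M : ℝ) - 1) + Real.exp ((μ i - μ j) * (μ i + μ j - 2 * x) / 2) ≤
        1 / ((M : ℝ) - 1) + Real.exp ((μ i - μ j) * (μ i + μ j - 2 * x') / 2) := by
      gcongr
    have hApos : (0 : ℝ) < 1 / ((M : ℝ) - 1) +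
        Real.exp ((μ i - μ j) * (μ i + μ j - 2 * x') / 2) := by positivity
    have hM1' : (1 : ℝ) ≤ (M : ℝ) := by linarith
    nlinarith [hApos, hM1']
  · -- μ j > μ i > 2, exponent at x is ≤ 0
    have hs : 4 < μ i + μ j := by linarith
    have hexle : (μ i - μ j) * (μ i + μ j - 2 * x) / 2 ≤ 0 := by
      have h1 : μ i - μ j < 0 := by linarith
      have h2 : 0 < μ i + μ j - 2 * x := by linarith
      nlinarith
    have h1 : Real.exp ((μ i - μ j) * (μ i + μ j - 2 * x) / 2) ≤ 1 :=
      Real.exp_le_one_iff.mpr hexle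
    have h2 : (0 : ℝ) < Real.exp ((μ i - μ j) * (μ i + μ j - 2 * x') / 2) :=
      Real.exp_pos _
    have hMinv : 1 / ((M : ℝ) - 1) + 1 ≤ (M : ℝ) * (1 / ((M : ℝ) - 1)) := by
      rw [mul_one_div, div_add' _ _ _ (ne_of_gt hMpos), div_le_div_iff₀ hMpos hMpos]
      ring_nf
      nlinarith
    have hMpos' : (0 : ℝ) < (M : ℝ) := by linarith
    nlinarith [h1, h2, hMinv, hinvpos]
end

section
/- Suppose X ~ N(μ*, 1) with μ* ≥ a for some a > log M + 3, and let μ₁,...,μ_M be centers with μ_i ≥ 0. Then E[w_i(X) · X] ≥ 0, where w_i(x) = exp(-(x-μ_i)²/2) / Σ_j exp(-(x-μ_j)²/2). -/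
open Real Finset MeasureTheory ProbabilityTheory

section aux

lemma gauss_int (m : ℝ) (f : ℝ → ℝ) :
    ∫ x, f x ∂(gaussianReal m 1) = ∫ x, gaussianPDFReal m 1 x * f x := by
  rw [gaussianReal_of_var_ne_zero _ one_ne_zero]
  have h : (gaussianPDF m 1) = fun x => ((gaussianPDFReal m 1 x).toNNReal : ENNReal) := rfl
  rw [h, integral_withDensity_eq_integral_smul ((measurable_gaussianPDFReal m 1).real_toNNReal) f]
  congr 1
  ext x
  rw [NNReal.smul_def, Real.coe_toNNReal _ (gaussianPDFReal_nonneg m 1 x)]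
  rfl

lemma pdf_eq (m x : ℝ) :
    gaussianPDFReal m 1 x = (Real.sqrt (2*π))⁻¹ * Real.exp (-(x-m)^2/2) := by
  rw [gaussianPDFReal]
  norm_num

lemma pdf_nonneg' (m x : ℝ) : 0 ≤ gaussianPDFReal m 1 x := gaussianPDFReal_nonneg m 1 x

lemma pdf_le (m x : ℝ) (hx : x ≤ 0) (hm : 0 ≤ m) :
    gaussianPDFReal m 1 x ≤ (Real.sqrt (2*π))⁻¹ * (Real.exp (-m^2/2) * Real.exp (-2⁻¹*x^2)) := by
  rw [pdf_eq, ← Real.exp_add]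
  have h2 : (0:ℝ) < Real.sqrt (2*π) := Real.sqrt_pos.mpr (by positivity)
  apply mul_le_mul_of_nonneg_left _ (by positivity)
  apply Real.exp_le_exp.mpr
  nlinarith [mul_nonneg (neg_nonneg.mpr hx) hm]

lemma pdf_ge (m x b : ℝ) (h : (x - m)^2 ≤ b) :
    (Real.sqrt (2*π))⁻¹ * Real.exp (-b/2) ≤ gaussianPDFReal m 1 x := by
  rw [pdf_eq]
  apply mul_le_mul_of_nonneg_left _ (by positivity)
  apply Real.exp_le_exp.mpr
  linarith

lemma integrable_xexp : Integrable (fun x : ℝ => x * Real.exp (-2⁻¹*x^2)) :=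
  integrable_mul_exp_neg_mul_sq (by norm_num)

lemma int_Iic_xexp : ∫ x in Set.Iic (0:ℝ), x * Real.exp (-2⁻¹*x^2) = -1 := by
  have hderiv : ∀ x ∈ Set.Iio (0:ℝ),
      HasDerivAt (fun y : ℝ => -Real.exp (-2⁻¹*y^2)) (x * Real.exp (-2⁻¹*x^2)) x := by
    intro x _
    have h1 : HasDerivAt (fun y : ℝ => -2⁻¹*y^2) (-2⁻¹*(2*x)) x := by
      simpa using (hasDerivAt_pow 2 x).const_mul (-2⁻¹ : ℝ)
    have h2 : HasDerivAt (fun y : ℝ => -Real.exp (-2⁻¹*y^2)) (-(Real.exp (-2⁻¹*x^2) * (-2⁻¹*(2*x)))) x := (h1.exp).neg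
    convert h2 using 1
    ring
  have htend : Filter.Tendsto (fun y : ℝ => -Real.exp (-2⁻¹*y^2)) Filter.atBot (nhds 0) := by
    rw [show (0:ℝ) = -0 by ring]
    apply Filter.Tendsto.neg
    apply Real.tendsto_exp_atBot.comp
    have h1 : Filter.Tendsto (fun y : ℝ => y^2) Filter.atBot Filter.atTop := by
      have := (Filter.tendsto_pow_atTop (two_ne_zero)).comp (Filter.tendsto_neg_atBot_atTop (G := ℝ))
      simpa [Function.comp_def, neg_sq] using this
    have h2 : Filter.Tendsto (fun y : ℝ => -2⁻¹*y^2) Filter.atBot Filter.atBot := by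
      apply Filter.Tendsto.const_mul_atTop_of_neg (by norm_num) h1
    exact h2
  have := integral_Iic_of_hasDerivAt_of_tendsto
    (f := fun y : ℝ => -Real.exp (-2⁻¹*y^2)) (f' := fun x => x * Real.exp (-2⁻¹*x^2))
    (a := 0) (m := 0) ?_ hderiv (integrable_xexp.integrableOn) htend
  · rw [this]; norm_num
  · exact (Continuous.continuousWithinAt (by fun_prop))

end aux

set_option maxHeartbeats 2000000 in
theorem key (M : ℕ) (hM : 1 ≤ M) (μstar : ℝ) (hL : Real.log M + 3 < μstar)
    (μ : Fin M → ℝ) (i : Fin M) (hμi : 0 ≤ μ i) :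
    0 ≤ ∫ x, gaussianPDFReal μstar 1 x *
      ((Real.exp (-(x - μ i) ^ 2 / 2) / ∑ j : Fin M, Real.exp (-(x - μ j) ^ 2 / 2)) * x) := by
  have hlogM0 : 0 ≤ Real.log M := Real.log_nonneg (by exact_mod_cast hM)
  have hμ3 : (3:ℝ) < μstar := by linarith
  -- notation
  set W : ℝ → ℝ := fun x =>
    Real.exp (-(x - μ i) ^ 2 / 2) / ∑ j : Fin M, Real.exp (-(x - μ j) ^ 2 / 2) with hWdef
  set F : ℝ → ℝ := fun x => gaussianPDFReal μstar 1 x * (W x * x) with hFdef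
  show 0 ≤ ∫ x, F x
  have hDpos : ∀ x : ℝ, 0 < ∑ j : Fin M, Real.exp (-(x - μ j) ^ 2 / 2) :=
    fun x => Finset.sum_pos (fun j _ => Real.exp_pos _) ⟨i, mem_univ i⟩
  have hW0 : ∀ x, 0 ≤ W x := fun x => div_nonneg (Real.exp_pos _).le (hDpos x).le
  have hW1 : ∀ x, W x ≤ 1 := by
    intro x
    rw [hWdef]
    apply div_le_one_of_le₀ _ (hDpos x).le
    exact Finset.single_le_sum (f := fun j => Real.exp (-(x - μ j) ^ 2 / 2))
      (fun j _ => (Real.exp_pos _).le) (mem_univ i)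
  -- geometric quantities
  obtain ⟨c, hc⟩ : ∃ c:ℝ, c = (μ i + μstar)/2 := ⟨_, rfl⟩
  obtain ⟨m0, hm0⟩ : ∃ m0:ℝ, m0 = min c μstar := ⟨_, rfl⟩
  obtain ⟨d, hd⟩ : ∃ d:ℝ, d = μstar - m0 := ⟨_, rfl⟩
  obtain ⟨p, hp⟩ : ∃ p:ℝ, p = m0 - 1/2 := ⟨_, rfl⟩
  have hm0l : μstar/2 ≤ m0 := by rw [hm0]; exact le_min (by rw [hc]; linarith) (by linarith)
  have hm0u : m0 ≤ μstar := by rw [hm0]; exact min_le_right _ _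
  have hd0 : 0 ≤ d := by rw [hd]; linarith
  have hd2 : d ≤ μstar/2 := by rw [hd]; linarith
  have hp1 : 1 ≤ p := by rw [hp]; linarith
  have hdc : (μstar - μ i)/2 ≤ d := by
    have h1 : m0 ≤ c := by rw [hm0]; exact min_le_left _ _
    rw [hd]; rw [hc] at h1; linarith
  -- the log-ratio function
  obtain ⟨ℓ, hℓ⟩ : ∃ f : Fin M → ℝ → ℝ, f = fun j x => x*(μ j - μ i) + ((μ i)^2 - (μ j)^2)/2 :=
    ⟨_, rfl⟩
  have hne : (univ : Finset (Fin M)).Nonempty := ⟨i, mem_univ i⟩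
  obtain ⟨ρ, hρ⟩ : ∃ r:ℝ, r = univ.sup' hne (fun j => max (ℓ j p) (ℓ j m0)) := ⟨_, rfl⟩
  have hℓi : ∀ x : ℝ, ℓ i x = 0 := by intro x; rw [hℓ]; ring
  have hρ0 : 0 ≤ ρ := by
    rw [hρ]
    calc (0:ℝ) = max (ℓ i p) (ℓ i m0) := by rw [hℓi, hℓi]; simp
    _ ≤ _ := Finset.le_sup' (f := fun j => max (ℓ j p) (ℓ j m0)) (mem_univ i)
  have hρub : ∀ j : Fin M, ∀ x ∈ Set.Icc p m0, ℓ j x ≤ ρ := by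
    intro j x hx
    have hmax : ℓ j x ≤ max (ℓ j p) (ℓ j m0) := by
      obtain ⟨h1, h2⟩ := hx
      rcases le_total (μ j - μ i) 0 with h | h
      · exact le_max_of_le_left (by simp only [hℓ]; have := mul_le_mul_of_nonpos_right h1 h; linarith)
      · exact le_max_of_le_right (by simp only [hℓ]; have := mul_le_mul_of_nonneg_right h2 h; linarith)
    rw [hρ]
    exact hmax.trans (Finset.le_sup' (f := fun j => max (ℓ j p) (ℓ j m0)) (mem_univ j))
  -- exp identity: term j = term i * exp (ℓ j x)
  have hterm : ∀ (j : Fin M) (x : ℝ),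
      Real.exp (-(x - μ j) ^ 2 / 2) = Real.exp (-(x - μ i) ^ 2 / 2) * Real.exp (ℓ j x) := by
    intro j x
    rw [← Real.exp_add]
    congr 1
    rw [hℓ]; ring
  -- lower bound for W on the interval
  have hMpos : (0:ℝ) < M := by exact_mod_cast Nat.lt_of_lt_of_le Nat.zero_lt_one hM
  have hWub : ∀ (j : Fin M) (x : ℝ), W x ≤ Real.exp (-(ℓ j x)) := by
    intro j x
    have hDge : Real.exp (-(x - μ j) ^ 2 / 2) ≤ ∑ k : Fin M, Real.exp (-(x - μ k) ^ 2 / 2) :=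
      Finset.single_le_sum (f := fun k => Real.exp (-(x - μ k) ^ 2 / 2))
        (fun k _ => (Real.exp_pos _).le) (mem_univ j)
    have h1 : W x ≤ Real.exp (-(x - μ i) ^ 2 / 2) / Real.exp (-(x - μ j) ^ 2 / 2) := by
      rw [hWdef]
      exact div_le_div_of_nonneg_left (Real.exp_pos _).le (Real.exp_pos _) hDge
    refine h1.trans_eq ?_
    rw [hterm j x, Real.exp_neg, div_mul_eq_div_div,
      div_self (ne_of_gt (Real.exp_pos _)), one_div]
  have hWlb : ∀ x ∈ Set.Icc p m0, Real.exp (-ρ)/M ≤ W x := by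
    intro x hx
    have hD : (∑ j : Fin M, Real.exp (-(x - μ j)^2/2))
        ≤ M * (Real.exp (-(x - μ i)^2/2) * Real.exp ρ) := by
      calc (∑ j : Fin M, Real.exp (-(x - μ j)^2/2))
          = ∑ j : Fin M, Real.exp (-(x - μ i)^2/2) * Real.exp (ℓ j x) :=
            Finset.sum_congr rfl fun j _ => hterm j x
        _ ≤ ∑ _j : Fin M, Real.exp (-(x - μ i)^2/2) * Real.exp ρ :=
            Finset.sum_le_sum fun j _ => mul_le_mul_of_nonneg_left
              (Real.exp_le_exp.mpr (hρub j x hx)) (Real.exp_pos _).le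
        _ = M * (Real.exp (-(x - μ i)^2/2) * Real.exp ρ) := by
            rw [Finset.sum_const, Finset.card_univ, Fintype.card_fin, nsmul_eq_mul]
    rw [hWdef]
    rw [div_le_div_iff₀ hMpos (hDpos x)]
    have h2 := mul_le_mul_of_nonneg_left hD (Real.exp_pos (-ρ)).le
    have h3 : Real.exp (-ρ) * (M * (Real.exp (-(x - μ i)^2/2) * Real.exp ρ))
        = Real.exp (-(x - μ i)^2/2) * M := by
      rw [Real.exp_neg]
      field_simp [ne_of_gt (Real.exp_pos ρ)]
    linarith
  -- upper bound for W on the negatives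
  obtain ⟨K, hKρ, hKub⟩ : ∃ K:ℝ, ρ - d^2/2 ≤ K ∧ ∀ x ≤ 0, W x ≤ Real.exp (-K) := by
    obtain ⟨j0, _, hj0⟩ := Finset.exists_mem_eq_sup' hne (fun j => max (ℓ j p) (ℓ j m0))
    rcases le_or_gt ρ 0 with hρneg | hρpos
    · refine ⟨0, by nlinarith [sq_nonneg d], fun x _ => by simpa using hW1 x⟩
    · have hρt : ρ = ℓ j0 p ∨ ρ = ℓ j0 m0 := by
        rw [hρ, hj0]
        rcases max_cases (ℓ j0 p) (ℓ j0 m0) with ⟨h, _⟩ | ⟨h, _⟩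
        · exact Or.inl h
        · exact Or.inr h
      obtain ⟨t, ht0, htm, htρ⟩ : ∃ t:ℝ, 0 < t ∧ t ≤ m0 ∧ ρ = ℓ j0 t := by
        rcases hρt with h | h
        · exact ⟨p, by linarith, by linarith, h⟩
        · exact ⟨m0, by linarith, le_refl _, h⟩
      rcases le_or_gt (μ j0) (μ i) with hji | hji
      · refine ⟨((μ i)^2 - (μ j0)^2)/2, ?_, ?_⟩
        · have h1 : ρ ≤ ((μ i)^2 - (μ j0)^2)/2 := by
            rw [htρ]; simp only [hℓ]
            have := mul_nonneg ht0.le (sub_nonneg.mpr hji)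
            nlinarith
          nlinarith [sq_nonneg d]
        · intro x hx
          refine (hWub j0 x).trans (Real.exp_le_exp.mpr ?_)
          simp only [hℓ]
          have := mul_nonneg (neg_nonneg.mpr hx) (sub_nonneg.mpr hji)
          nlinarith
      · refine ⟨0, ?_, fun x _ => by simpa using hW1 x⟩
        have htc : t ≤ c := htm.trans (by rw [hm0]; exact min_le_left _ _)
        have htd : t - μ i ≤ d := by rw [hc] at htc; linarith
        have hρle : ρ ≤ (t - μ i)^2/2 := by
          rw [htρ]; simp only [hℓ]
          nlinarith [sq_nonneg (t - μ j0)]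
        have hti : 0 < t - μ i := by
          by_contra hcon
          push_neg at hcon
          rw [htρ] at hρpos; simp only [hℓ] at hρpos
          nlinarith [mul_nonneg (neg_nonneg.mpr hcon) (sub_nonneg.mpr hji.le),
            sq_nonneg (μ j0 - μ i)]
        nlinarith [hρle, htd, hti, hd0, mul_self_le_mul_self hti.le htd]
  -- integrability
  have hWmeas : Continuous W := by
    apply Continuous.div (by fun_prop) (by fun_prop)
    exact fun x => ne_of_gt (hDpos x)
  have hpdf_cont : Continuous (gaussianPDFReal μstar 1) := by
    unfold gaussianPDFReal
    fun_prop
  have hx_pdf : Integrable (fun x => x * gaussianPDFReal μstar 1 x) := by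
    have h0 : (0:ℝ) < 2⁻¹ := by norm_num
    have h1 : Integrable (fun x:ℝ => (x + μstar) * Real.exp (-2⁻¹*x^2)) := by
      have h2 := integrable_xexp.add ((integrable_exp_neg_mul_sq h0).const_mul μstar)
      apply h2.congr
      filter_upwards with x
      simp only [Pi.add_apply]
      ring
    have h2 := (h1.comp_sub_right μstar).const_mul (Real.sqrt (2*π))⁻¹
    apply h2.congr
    filter_upwards with x
    rw [pdf_eq]
    have : -2⁻¹*(x - μstar)^2 = -(x-μstar)^2/2 := by ring
    rw [this]
    ring
  have hInt : Integrable F := by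
    apply (hx_pdf.abs).mono'
    · exact ((hpdf_cont.mul (hWmeas.mul continuous_id)).aestronglyMeasurable)
    · filter_upwards with x
      rw [Real.norm_eq_abs]
      have h1 : |F x| = gaussianPDFReal μstar 1 x * (W x * |x|) := by
        rw [hFdef]
        rw [abs_mul, abs_of_nonneg (pdf_nonneg' μstar x), abs_mul,
          abs_of_nonneg (hW0 x)]
      have h2 : gaussianPDFReal μstar 1 x * (W x * |x|)
          ≤ gaussianPDFReal μstar 1 x * (1 * |x|) := by
        apply mul_le_mul_of_nonneg_left _ (pdf_nonneg' μstar x)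
        exact mul_le_mul_of_nonneg_right (hW1 x) (abs_nonneg x)
      rw [h1]
      calc gaussianPDFReal μstar 1 x * (W x * |x|)
          ≤ gaussianPDFReal μstar 1 x * (1 * |x|) := h2
        _ ≤ |x * gaussianPDFReal μstar 1 x| := by
            rw [abs_mul, abs_of_nonneg (pdf_nonneg' μstar x), one_mul]
            rw [mul_comm]
  have hsplit : ∫ x, F x = (∫ x in Set.Iic 0, F x) + ∫ x in Set.Ioi 0, F x := by
    rw [← Set.compl_Iic]
    exact (integral_add_compl measurableSet_Iic hInt).symm
  have hneg : -(Real.exp (-K) * ((Real.sqrt (2*π))⁻¹ * Real.exp (-μstar^2/2)))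
      ≤ ∫ x in Set.Iic 0, F x := by
    have hμpos : (0:ℝ) ≤ μstar := by linarith
    have hpt : ∀ x ∈ Set.Iic (0:ℝ),
        Real.exp (-K) * ((Real.sqrt (2*π))⁻¹ * Real.exp (-μstar^2/2)) * (x * Real.exp (-2⁻¹*x^2))
          ≤ F x := by
      intro x hx
      have hx0 : x ≤ 0 := hx
      have h1 : Real.exp (-K) * x ≤ W x * x := by
        have := mul_nonneg (sub_nonneg.mpr (hKub x hx0)) (neg_nonneg.mpr hx0)
        nlinarith
      have h2 : gaussianPDFReal μstar 1 x * (Real.exp (-K) * x)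
          ≤ gaussianPDFReal μstar 1 x * (W x * x) :=
        mul_le_mul_of_nonneg_left h1 (pdf_nonneg' μstar x)
      have hc0 : Real.exp (-K) * x ≤ 0 := mul_nonpos_of_nonneg_of_nonpos (Real.exp_pos _).le hx0
      have h3 := mul_le_mul_of_nonpos_right (pdf_le μstar x hx0 hμpos) hc0
      have h4 : Real.exp (-K) * ((Real.sqrt (2*π))⁻¹ * Real.exp (-μstar^2/2))
            * (x * Real.exp (-2⁻¹*x^2))
          = (Real.sqrt (2*π))⁻¹ * (Real.exp (-μstar^2/2) * Real.exp (-2⁻¹*x^2))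
            * (Real.exp (-K) * x) := by ring
      rw [hFdef]
      simp only
      rw [h4]
      exact le_trans h3 h2
    have hintm := setIntegral_mono_on
      ((integrable_xexp.const_mul
        (Real.exp (-K) * ((Real.sqrt (2*π))⁻¹ * Real.exp (-μstar^2/2)))).integrableOn)
      (hInt.integrableOn) measurableSet_Iic hpt
    rw [MeasureTheory.integral_const_mul, int_Iic_xexp] at hintm
    linarith
  have hpos : (1/2) * (p * (Real.exp (-ρ)/M * ((Real.sqrt (2*π))⁻¹ * Real.exp (-((d+1/2)^2)/2))))
      ≤ ∫ x in Set.Ioi 0, F x := by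
    have hsub : Set.Icc p m0 ⊆ Set.Ioi (0:ℝ) := fun x hx => lt_of_lt_of_le (by linarith) hx.1
    have h1 : ∫ x in Set.Icc p m0, F x ≤ ∫ x in Set.Ioi 0, F x := by
      refine setIntegral_mono_set hInt.integrableOn ?_ (HasSubset.Subset.eventuallyLE hsub)
      filter_upwards [ae_restrict_mem measurableSet_Ioi] with x hx
      rw [hFdef]
      simp only
      exact mul_nonneg (pdf_nonneg' μstar x) (mul_nonneg (hW0 x) (le_of_lt hx))
    have h2 : ∀ x ∈ Set.Icc p m0,
        p * (Real.exp (-ρ)/M * ((Real.sqrt (2*π))⁻¹ * Real.exp (-((d+1/2)^2)/2))) ≤ F x := by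
      intro x hx
      obtain ⟨hx1, hx2⟩ := hx
      have hsq : (x - μstar)^2 ≤ (d+1/2)^2 := by nlinarith
      have hpdfge := pdf_ge μstar x ((d+1/2)^2) hsq
      have m1 : Real.exp (-ρ)/M * ((Real.sqrt (2*π))⁻¹ * Real.exp (-((d+1/2)^2)/2))
          ≤ W x * gaussianPDFReal μstar 1 x :=
        mul_le_mul (hWlb x ⟨hx1, hx2⟩) hpdfge (by positivity) (hW0 x)
      have m2 : p * (Real.exp (-ρ)/M * ((Real.sqrt (2*π))⁻¹ * Real.exp (-((d+1/2)^2)/2)))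
          ≤ x * (W x * gaussianPDFReal μstar 1 x) :=
        mul_le_mul hx1 m1 (by positivity) (by linarith)
      have hFx : F x = x * (W x * gaussianPDFReal μstar 1 x) := by
        rw [hFdef]; simp only; ring
      rw [hFx]
      exact m2
    have h3 := setIntegral_mono_on
      (integrableOn_const (by rw [Real.volume_Icc]; exact ENNReal.ofReal_ne_top))
      (hInt.integrableOn) measurableSet_Icc h2
    rw [setIntegral_const, measureReal_def, Real.volume_Icc, ENNReal.toReal_ofReal (by linarith), smul_eq_mul] at h3
    have hmp : m0 - p = 1/2 := by rw [hp]; ring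
    rw [hmp] at h3
    linarith
  have hstar : Real.exp (-K) * ((Real.sqrt (2*π))⁻¹ * Real.exp (-μstar^2/2))
      ≤ (1/2) * (p * (Real.exp (-ρ)/M * ((Real.sqrt (2*π))⁻¹ * Real.exp (-((d+1/2)^2)/2)))) := by
    have h2M : (0:ℝ) < 2*M := by positivity
    have hlog2M : Real.log (2*M) = Real.log 2 + Real.log M :=
      Real.log_mul two_ne_zero (ne_of_gt hMpos)
    have hexp_ineq : -K + -(μstar^2/2) ≤ (-ρ + -((d+1/2)^2/2)) + -(Real.log (2*M)) := by
      rw [hlog2M]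
      nlinarith [Real.log_two_lt_d9, sq_nonneg (μstar - 5/2), hKρ, hd0, hd2, hL, hlogM0,
        sq_nonneg (μstar/2 - d), sq_nonneg (μstar/2 + d)]
    have core : Real.exp (-K) * Real.exp (-(μstar^2/2))
        ≤ (1/2) * (Real.exp (-ρ)/M * Real.exp (-((d+1/2)^2/2))) := by
      rw [← Real.exp_add]
      calc Real.exp (-K + -(μstar^2/2))
          ≤ Real.exp ((-ρ + -((d+1/2)^2/2)) + -(Real.log (2*M))) := Real.exp_le_exp.mpr hexp_ineq
        _ = Real.exp (-ρ) * Real.exp (-((d+1/2)^2/2)) * (2*(M:ℝ))⁻¹ := by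
            rw [Real.exp_add, Real.exp_add,
              show Real.exp (-Real.log (2*(M:ℝ))) = (2*(M:ℝ))⁻¹ from by
                rw [Real.exp_neg, Real.exp_log h2M]]
        _ = (1/2) * (Real.exp (-ρ)/M * Real.exp (-((d+1/2)^2/2))) := by
            field_simp
    have hfin : Real.exp (-K) * Real.exp (-(μstar^2/2))
        ≤ (1/2) * (p * (Real.exp (-ρ)/M * Real.exp (-((d+1/2)^2/2)))) := by
      have hfac : (0:ℝ) ≤ Real.exp (-ρ)/M * Real.exp (-((d+1/2)^2/2)) := by positivity
      nlinarith [mul_nonneg (by linarith : (0:ℝ) ≤ p - 1) hfac]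
    have hs : (0:ℝ) ≤ (Real.sqrt (2*π))⁻¹ := by positivity
    have heq1 : -μstar^2/2 = -(μstar^2/2) := by ring
    have heq2 : -((d+1/2)^2)/2 = -((d+1/2)^2/2) := by ring
    rw [heq1, heq2]
    calc Real.exp (-K) * ((Real.sqrt (2*π))⁻¹ * Real.exp (-(μstar^2/2)))
        = (Real.sqrt (2*π))⁻¹ * (Real.exp (-K) * Real.exp (-(μstar^2/2))) := by ring
      _ ≤ (Real.sqrt (2*π))⁻¹ *
          ((1/2) * (p * (Real.exp (-ρ)/M * Real.exp (-((d+1/2)^2/2))))) :=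
            mul_le_mul_of_nonneg_left hfin hs
      _ = (1/2) * (p * (Real.exp (-ρ)/M * ((Real.sqrt (2*π))⁻¹ * Real.exp (-((d+1/2)^2/2))))) := by
            ring
  rw [hsplit]
  linarith

/-- if `X ~ N(μ*, 1)` with `μ* ≥ a` for some `a > log M + 3`, and
`μᵢ ≥ 0`, then `E[w_i(X)·X] ≥ 0`. -/
theorem stmt_2 (M : ℕ) (hM : 1 ≤ M) (a : ℝ) (ha : Real.log M + 3 < a)
    (μstar : ℝ) (hμstar : a ≤ μstar)
    (μ : Fin M → ℝ) (i : Fin M) (hμi : 0 ≤ μ i)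
    (w : ℝ → ℝ)
    (hw : ∀ x : ℝ, w x =
      Real.exp (-(x - μ i) ^ 2 / 2) / ∑ j : Fin M, Real.exp (-(x - μ j) ^ 2 / 2)) :
    0 ≤ ∫ x, w x * x ∂(gaussianReal μstar 1) := by
  rw [gauss_int]
  simp only [hw]
  exact key M hM μstar (by linarith) μ i hμi
end

section
/- If x ∈ (-∞, -2r/3], μ_i ≥ 0, and there exists j with |μ_j + r| ≤ r/6 (so μ_j ≥ -7r/6), then the membership weight satisfies w_i(x) ≤ exp(-r²/18). -/
open Real Finset

/-- if `x ≤ -2r/3`, `μᵢ ≥ 0`, and some center `μⱼ` satisfies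
`|μⱼ + r| ≤ r/6`, then the membership weight satisfies `w_i(x) ≤ exp(-r²/18)`. -/
theorem stmt_5 (M : ℕ) (μ : Fin M → ℝ) (i : Fin M) (r : ℝ) (hr : 0 < r)
    (hμi : 0 ≤ μ i) (hj : ∃ j : Fin M, |μ j + r| ≤ r / 6)
    (w : ℝ → ℝ)
    (hw : ∀ x : ℝ, w x =
      Real.exp (-(x - μ i) ^ 2 / 2) / ∑ k : Fin M, Real.exp (-(x - μ k) ^ 2 / 2)) :
    ∀ x : ℝ, x ≤ -(2 * r / 3) → w x ≤ Real.exp (-r ^ 2 / 18) := by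
  obtain ⟨j, hjb⟩ := hj
  rw [abs_le] at hjb
  intro x hx
  have hS : Real.exp (-(x - μ j) ^ 2 / 2) ≤ ∑ k : Fin M, Real.exp (-(x - μ k) ^ 2 / 2) :=
    Finset.single_le_sum (f := fun k => Real.exp (-(x - μ k) ^ 2 / 2)) (fun k _ => (Real.exp_pos _).le) (Finset.mem_univ j)
  have h1 : w x ≤ Real.exp (-(x - μ i) ^ 2 / 2) / Real.exp (-(x - μ j) ^ 2 / 2) := by
    rw [hw]
    exact div_le_div_of_nonneg_left (Real.exp_pos _).le (Real.exp_pos _) hS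
  rw [← Real.exp_sub] at h1
  refine h1.trans (Real.exp_le_exp.2 ?_)
  have hx0 : x ≤ 0 := by nlinarith
  nlinarith [sq_nonneg (x - μ i), sq_nonneg x, mul_nonneg (neg_nonneg.2 hx0) hμi,
    mul_le_mul_of_nonpos_left hjb.1 hx0, sq_nonneg (μ j + r)]
end

section
/- For the one-dimensional 3-component uniform Gaussian mixture with true centers (-R, R, γR), the population log-likelihood evaluated at μ̃ = (0, γR, γR) converges, as γ → +∞, to -(2R² + 3 - 2 log 2)/6 - log(3√(2π)). -/
open Real MeasureTheory ProbabilityTheory Filter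
open scoped ENNReal NNReal


lemma gauss0 : ∫ x : ℝ, rexp (-x ^ 2 / 2) = Real.sqrt (2 * π) := by
  have : ∀ x : ℝ, -x ^ 2 / 2 = -(1/2) * x ^ 2 := fun x => by ring
  simp_rw [this, integral_gaussian]
  rw [show π / (1/2) = 2 * π by ring]

lemma gauss0' (c : ℝ) : ∫ x : ℝ, rexp (-(x - c) ^ 2 / 2) = Real.sqrt (2 * π) := by
  rw [integral_sub_right_eq_self (μ := volume) (fun a => rexp (-a ^ 2 / 2)) c]
  exact gauss0

lemma int_gauss : Integrable (fun x : ℝ => rexp (-x ^ 2 / 2)) := by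
  have : ∀ x : ℝ, -x ^ 2 / 2 = -(1/2) * x ^ 2 := fun x => by ring
  simp_rw [this]
  exact integrable_exp_neg_mul_sq (by norm_num)

lemma int_gauss' (c : ℝ) : Integrable (fun x : ℝ => rexp (-(x - c) ^ 2 / 2)) :=
  int_gauss.comp_sub_right c

lemma int_mul_gauss : Integrable (fun x : ℝ => x * rexp (-x ^ 2 / 2)) := by
  have : ∀ x : ℝ, -x ^ 2 / 2 = -(1/2) * x ^ 2 := fun x => by ring
  simp_rw [this]
  exact integrable_mul_exp_neg_mul_sq (by norm_num)

lemma int_sq_gauss : Integrable (fun x : ℝ => x ^ 2 * rexp (-x ^ 2 / 2)) := by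
  have : ∀ x : ℝ, x ^ 2 * rexp (-x ^ 2 / 2) = x ^ (2:ℝ) * rexp (-(1/2) * x ^ 2) := fun x => by
    rw [show (2:ℝ) = ((2:ℕ):ℝ) by norm_num, Real.rpow_natCast]; ring_nf
  simp_rw [this]
  exact integrable_rpow_mul_exp_neg_mul_sq (by norm_num) (by norm_num)

lemma gauss1 : ∫ x : ℝ, x * rexp (-x ^ 2 / 2) = 0 := by
  have h := MeasureTheory.integral_neg_eq_self (fun x : ℝ => x * rexp (-x ^ 2 / 2)) volume
  simp only [neg_mul, neg_neg, neg_sq] at h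
  have h2 : ∫ x : ℝ, -(x * rexp (-x ^ 2 / 2)) = ∫ x : ℝ, x * rexp (-x ^ 2 / 2) := by
    simpa using h
  rw [integral_neg] at h2
  linarith

lemma gauss2 : ∫ x : ℝ, x ^ 2 * rexp (-x ^ 2 / 2) = Real.sqrt (2 * π) := by
  have h := integral_comp_abs (f := fun t : ℝ => t ^ 2 * rexp (-t ^ 2 / 2))
  simp only [sq_abs] at h
  rw [h]
  have h2 : ∫ x in Set.Ioi (0:ℝ), x ^ 2 * rexp (-x ^ 2 / 2)
      = ∫ x in Set.Ioi (0:ℝ), x ^ (2:ℝ) * rexp (-(1/2) * x ^ (2:ℝ)) := by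
    refine setIntegral_congr_fun measurableSet_Ioi (fun x _ => ?_)
    rw [show (2:ℝ) = ((2:ℕ):ℝ) by norm_num, Real.rpow_natCast]; ring_nf
  rw [h2, integral_rpow_mul_exp_neg_mul_rpow (by norm_num) (by norm_num) (by norm_num)]
  rw [show ((2:ℝ) + 1) / 2 = 1/2 + 1 by norm_num, Real.Gamma_add_one (by norm_num),
    Real.Gamma_one_half_eq]
  rw [show (-((2:ℝ) + 1) / 2) = -(3/2 : ℝ) by norm_num]
  rw [show ((1:ℝ)/2) = (2:ℝ)⁻¹ by norm_num, Real.inv_rpow (by norm_num),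
    ← Real.rpow_neg (by norm_num), neg_neg]
  rw [show ((3:ℝ)/2) = 1 + 1/2 by norm_num, Real.rpow_add (by norm_num), Real.rpow_one,
    ← Real.sqrt_eq_rpow]
  rw [Real.sqrt_mul (by norm_num)]
  ring









noncomputable def pdfm (m : ℝ) (x : ℝ) : ℝ := (Real.sqrt (2 * π))⁻¹ * rexp (-(x - m) ^ 2 / 2)

lemma pdfm_nonneg (m x : ℝ) : 0 ≤ pdfm m x := by
  unfold pdfm; positivity

lemma gaussianReal_eq (m : ℝ) : gaussianReal m 1
    = volume.withDensity (fun x => ((Real.toNNReal (pdfm m x) : ℝ≥0) : ℝ≥0∞)) := by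
  rw [gaussianReal_of_var_ne_zero m one_ne_zero, gaussianPDF_def]
  congr 1
  ext x
  have : gaussianPDFReal m 1 x = pdfm m x := by simp [gaussianPDFReal, pdfm]
  rw [this]
  rfl

lemma meas_pdfm (m : ℝ) : Measurable (fun x => Real.toNNReal (pdfm m x)) := by
  apply Measurable.real_toNNReal
  unfold pdfm
  fun_prop

lemma integral_gr (m : ℝ) (f : ℝ → ℝ) :
    ∫ x, f x ∂(gaussianReal m 1) = ∫ x, pdfm m x * f x := by
  rw [gaussianReal_eq, integral_withDensity_eq_integral_smul (meas_pdfm m) f]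
  congr 1
  ext x
  simp [NNReal.smul_def, Real.coe_toNNReal _ (pdfm_nonneg m x)]

lemma integrable_gr_iff (m : ℝ) (f : ℝ → ℝ) :
    Integrable f (gaussianReal m 1) ↔ Integrable (fun x => pdfm m x * f x) := by
  rw [gaussianReal_eq, integrable_withDensity_iff_integrable_smul (meas_pdfm m)]
  constructor <;> intro h <;> refine h.congr (ae_of_all _ fun x => ?_) <;>
    simp [NNReal.smul_def, Real.coe_toNNReal _ (pdfm_nonneg m x)]

lemma sqrt2pi_pos : 0 < Real.sqrt (2 * π) := Real.sqrt_pos.mpr (by positivity)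

lemma integral_exp_gr (s m : ℝ) :
    ∫ x, rexp (s * x) ∂(gaussianReal m 1) = rexp (s * m + s ^ 2 / 2) := by
  rw [integral_gr]
  have : ∀ x, pdfm m x * rexp (s * x)
      = (Real.sqrt (2 * π))⁻¹ * rexp (s * m + s ^ 2 / 2) * rexp (-(x - (m + s)) ^ 2 / 2) := by
    intro x
    unfold pdfm
    rw [mul_assoc, ← Real.exp_add, mul_assoc, ← Real.exp_add]
    congr 2
    ring
  simp_rw [this]
  rw [integral_const_mul, gauss0']
  field_simp

lemma integrable_exp_gr (s m : ℝ) :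
    Integrable (fun x => rexp (s * x)) (gaussianReal m 1) := by
  rw [integrable_gr_iff]
  have : ∀ x, pdfm m x * rexp (s * x)
      = (Real.sqrt (2 * π))⁻¹ * rexp (s * m + s ^ 2 / 2) * rexp (-(x - (m + s)) ^ 2 / 2) := by
    intro x
    unfold pdfm
    rw [mul_assoc, ← Real.exp_add, mul_assoc, ← Real.exp_add]
    congr 2
    ring
  simp_rw [this]
  exact (int_gauss' (m + s)).const_mul _

lemma integral_sq_gr (m c : ℝ) :
    ∫ x, (x - c) ^ 2 ∂(gaussianReal m 1) = (m - c) ^ 2 + 1 := by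
  rw [integral_gr]
  have hshift : (∫ x, pdfm m x * (x - c) ^ 2)
      = ∫ x, pdfm 0 x * (x + (m - c)) ^ 2 := by
    rw [← integral_sub_right_eq_self (μ := volume) (fun y => pdfm 0 y * (y + (m - c)) ^ 2) m]
    congr 1
    ext x
    unfold pdfm
    ring_nf
  have i1 : Integrable (fun x : ℝ => (Real.sqrt (2 * π))⁻¹ * (x ^ 2 * rexp (-x ^ 2 / 2))) :=
    int_sq_gauss.const_mul _
  have i2 : Integrable (fun x : ℝ => 2 * (m - c) * (Real.sqrt (2 * π))⁻¹ * (x * rexp (-x ^ 2 / 2))) :=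
    int_mul_gauss.const_mul _
  have i3 : Integrable (fun x : ℝ => (m - c) ^ 2 * (Real.sqrt (2 * π))⁻¹ * rexp (-x ^ 2 / 2)) :=
    int_gauss.const_mul _
  have key : ∀ x : ℝ, pdfm 0 x * (x + (m - c)) ^ 2
      = (Real.sqrt (2 * π))⁻¹ * (x ^ 2 * rexp (-x ^ 2 / 2))
        + 2 * (m - c) * (Real.sqrt (2 * π))⁻¹ * (x * rexp (-x ^ 2 / 2))
        + (m - c) ^ 2 * (Real.sqrt (2 * π))⁻¹ * rexp (-x ^ 2 / 2) := by
    intro x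
    unfold pdfm
    ring_nf
  have i12 : Integrable (fun x : ℝ => (Real.sqrt (2 * π))⁻¹ * (x ^ 2 * rexp (-x ^ 2 / 2))
      + 2 * (m - c) * (Real.sqrt (2 * π))⁻¹ * (x * rexp (-x ^ 2 / 2))) := i1.add i2
  rw [hshift]
  simp_rw [key]
  rw [integral_add i12 i3, integral_add i1 i2, integral_const_mul, integral_const_mul,
    integral_const_mul, gauss1, gauss2, gauss0]
  have h := sqrt2pi_pos.ne'
  field_simp
  ring

lemma integrable_sq_gr (m c : ℝ) :
    Integrable (fun x => (x - c) ^ 2) (gaussianReal m 1) := by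
  rw [integrable_gr_iff]
  have h : Integrable (fun y : ℝ => (Real.sqrt (2 * π))⁻¹ * (y ^ 2 * rexp (-y ^ 2 / 2))
      + 2 * (m - c) * (Real.sqrt (2 * π))⁻¹ * (y * rexp (-y ^ 2 / 2))
      + (m - c) ^ 2 * (Real.sqrt (2 * π))⁻¹ * rexp (-y ^ 2 / 2)) :=
    ((int_sq_gauss.const_mul _).add (int_mul_gauss.const_mul _)).add (int_gauss.const_mul _)
  refine (h.comp_sub_right m).congr (ae_of_all _ fun x => ?_)
  show _ = pdfm m x * (x - c) ^ 2
  unfold pdfm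
  ring_nf

lemma integrable_const_gr (m c : ℝ) : Integrable (fun _ : ℝ => c) (gaussianReal m 1) :=
  integrable_const c

lemma one_add_sq_le_exp {s : ℝ} (hs : 0 ≤ s) : 1 + s ^ 2 ≤ rexp s := by
  have h := Real.sum_le_exp_of_nonneg hs 4
  have : (1 : ℝ) + s + s ^ 2 / 2 + s ^ 3 / 6 ≤ rexp s := by
    convert h using 1
    rw [Finset.sum_range_succ, Finset.sum_range_succ, Finset.sum_range_succ,
      Finset.sum_range_succ, Finset.sum_range_zero]
    norm_num [Nat.factorial]
  nlinarith [sq_nonneg (s - 3/2), hs]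

lemma log_one_add_le_sqrt {t : ℝ} (ht : 0 ≤ t) : Real.log (1 + t) ≤ Real.sqrt t := by
  rw [Real.log_le_iff_le_exp (by linarith)]
  calc 1 + t = 1 + Real.sqrt t ^ 2 := by rw [Real.sq_sqrt ht]
    _ ≤ rexp (Real.sqrt t) := one_add_sq_le_exp (Real.sqrt_nonneg t)

lemma log_add_le {a b : ℝ} (ha : 0 < a) (hb : 0 ≤ b) :
    Real.log (a + b) ≤ Real.log a + Real.sqrt (b / a) := by
  have h : a + b = a * (1 + b / a) := by field_simp
  rw [h, Real.log_mul ha.ne' (by positivity)]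
  exact by have := log_one_add_le_sqrt (t := b / a) (by positivity); linarith

lemma le_log_add {a b : ℝ} (ha : 0 < a) (hb : 0 ≤ b) :
    Real.log a ≤ Real.log (a + b) :=
  Real.log_le_log ha (by linarith)

lemma sqrt_exp (w : ℝ) : Real.sqrt (rexp w) = rexp (w / 2) := by
  rw [show rexp w = rexp (w / 2) ^ 2 by rw [sq, ← Real.exp_add]; ring_nf,
    Real.sqrt_sq (Real.exp_pos _).le]

/-- the integrand -/
noncomputable def F (c : ℝ) (x : ℝ) : ℝ :=
  Real.log (Real.exp (-(x - 0) ^ 2 / 2) + Real.exp (-(x - c) ^ 2 / 2)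
    + Real.exp (-(x - c) ^ 2 / 2))

lemma F_lb1 (c x : ℝ) : -(x - 0) ^ 2 / 2 ≤ F c x := by
  have h := le_log_add (a := rexp (-(x - 0) ^ 2 / 2))
    (b := rexp (-(x - c) ^ 2 / 2) + rexp (-(x - c) ^ 2 / 2)) (Real.exp_pos _)
    (by positivity)
  rw [Real.log_exp] at h
  calc -(x - 0) ^ 2 / 2 ≤ Real.log (rexp (-(x - 0) ^ 2 / 2)
        + (rexp (-(x - c) ^ 2 / 2) + rexp (-(x - c) ^ 2 / 2))) := h
    _ = F c x := by rw [F, add_assoc]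

lemma F_ub1 (c x : ℝ) :
    F c x ≤ -(x - 0) ^ 2 / 2 + Real.sqrt 2 * rexp (c / 2 * x - c ^ 2 / 4) := by
  have h := log_add_le (a := rexp (-(x - 0) ^ 2 / 2))
    (b := rexp (-(x - c) ^ 2 / 2) + rexp (-(x - c) ^ 2 / 2)) (Real.exp_pos _)
    (by positivity)
  rw [Real.log_exp] at h
  have hq : (rexp (-(x - c) ^ 2 / 2) + rexp (-(x - c) ^ 2 / 2)) / rexp (-(x - 0) ^ 2 / 2)
      = 2 * rexp (-(x - c) ^ 2 / 2 - -(x - 0) ^ 2 / 2) := by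
    rw [Real.exp_sub]; ring
  have hs : Real.sqrt ((rexp (-(x - c) ^ 2 / 2) + rexp (-(x - c) ^ 2 / 2))
        / rexp (-(x - 0) ^ 2 / 2)) = Real.sqrt 2 * rexp (c / 2 * x - c ^ 2 / 4) := by
    rw [hq, Real.sqrt_mul (by norm_num), sqrt_exp]
    congr 2
    ring
  calc F c x = Real.log (rexp (-(x - 0) ^ 2 / 2)
        + (rexp (-(x - c) ^ 2 / 2) + rexp (-(x - c) ^ 2 / 2))) := by rw [F, add_assoc]
    _ ≤ -(x - 0) ^ 2 / 2 + Real.sqrt ((rexp (-(x - c) ^ 2 / 2) + rexp (-(x - c) ^ 2 / 2))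
        / rexp (-(x - 0) ^ 2 / 2)) := by rw [← hs] at *; exact h
    _ = -(x - 0) ^ 2 / 2 + Real.sqrt 2 * rexp (c / 2 * x - c ^ 2 / 4) := by rw [hs]

lemma F_lb3 (c x : ℝ) : Real.log 2 + -(x - c) ^ 2 / 2 ≤ F c x := by
  have h := le_log_add (a := rexp (-(x - c) ^ 2 / 2) + rexp (-(x - c) ^ 2 / 2))
    (b := rexp (-(x - 0) ^ 2 / 2)) (by positivity) (Real.exp_pos _).le
  have h2 : Real.log (rexp (-(x - c) ^ 2 / 2) + rexp (-(x - c) ^ 2 / 2))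
      = Real.log 2 + -(x - c) ^ 2 / 2 := by
    rw [show rexp (-(x - c) ^ 2 / 2) + rexp (-(x - c) ^ 2 / 2)
        = 2 * rexp (-(x - c) ^ 2 / 2) by ring,
      Real.log_mul (by norm_num) (Real.exp_pos _).ne', Real.log_exp]
  rw [h2] at h
  calc Real.log 2 + -(x - c) ^ 2 / 2
      ≤ Real.log (rexp (-(x - c) ^ 2 / 2) + rexp (-(x - c) ^ 2 / 2)
          + rexp (-(x - 0) ^ 2 / 2)) := h
    _ = F c x := by rw [F]; ring_nf

lemma F_ub3 (c x : ℝ) :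
    F c x ≤ Real.log 2 + -(x - c) ^ 2 / 2
      + (Real.sqrt 2)⁻¹ * rexp (-(c / 2) * x + c ^ 2 / 4) := by
  have h := log_add_le (a := rexp (-(x - c) ^ 2 / 2) + rexp (-(x - c) ^ 2 / 2))
    (b := rexp (-(x - 0) ^ 2 / 2)) (by positivity) (Real.exp_pos _).le
  have h2 : Real.log (rexp (-(x - c) ^ 2 / 2) + rexp (-(x - c) ^ 2 / 2))
      = Real.log 2 + -(x - c) ^ 2 / 2 := by
    rw [show rexp (-(x - c) ^ 2 / 2) + rexp (-(x - c) ^ 2 / 2)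
        = 2 * rexp (-(x - c) ^ 2 / 2) by ring,
      Real.log_mul (by norm_num) (Real.exp_pos _).ne', Real.log_exp]
  have hq : rexp (-(x - 0) ^ 2 / 2) / (rexp (-(x - c) ^ 2 / 2) + rexp (-(x - c) ^ 2 / 2))
      = 2⁻¹ * rexp (-(x - 0) ^ 2 / 2 - -(x - c) ^ 2 / 2) := by
    rw [Real.exp_sub]
    field_simp
    ring
  have hs : Real.sqrt (rexp (-(x - 0) ^ 2 / 2) / (rexp (-(x - c) ^ 2 / 2)
        + rexp (-(x - c) ^ 2 / 2))) = (Real.sqrt 2)⁻¹ * rexp (-(c / 2) * x + c ^ 2 / 4) := by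
    rw [hq, Real.sqrt_mul (by norm_num), sqrt_exp, Real.sqrt_inv]
    congr 2
    ring
  rw [h2, hs] at h
  calc F c x = Real.log (rexp (-(x - c) ^ 2 / 2) + rexp (-(x - c) ^ 2 / 2)
      + rexp (-(x - 0) ^ 2 / 2)) := by rw [F]; ring_nf
    _ ≤ _ := h

lemma F_abs_bound (c x : ℝ) :
    |F c x| ≤ (x - 0) ^ 2 / 2 + Real.sqrt 2 * rexp (c / 2 * x - c ^ 2 / 4) := by
  apply abs_le.mpr
  constructor
  · have := F_lb1 c x
    have hpos : 0 ≤ Real.sqrt 2 * rexp (c / 2 * x - c ^ 2 / 4) := by positivity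
    nlinarith [sq_nonneg (x - 0)]
  · have := F_ub1 c x
    nlinarith [sq_nonneg (x - 0)]

lemma F_cont (c : ℝ) : Continuous (F c) := by
  apply Continuous.log
  · fun_prop
  · intro x
    positivity












section D

/-- integrability of x ↦ k * exp (s x + d) -/
lemma integrable_exp_gen (k s d m : ℝ) :
    Integrable (fun x => k * rexp (s * x + d)) (gaussianReal m 1) := by
  refine ((integrable_exp_gr s m).const_mul (k * rexp d)).congr (ae_of_all _ fun x => ?_)
  simp only [Real.exp_add]
  ring

lemma integral_exp_gen (k s d m : ℝ) :
    ∫ x, k * rexp (s * x + d) ∂(gaussianReal m 1)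
      = k * rexp (s * m + s ^ 2 / 2 + d) := by
  have : ∀ x : ℝ, k * rexp (s * x + d) = (k * rexp d) * rexp (s * x) := by
    intro x
    rw [Real.exp_add]
    ring
  simp_rw [this]
  rw [integral_const_mul, integral_exp_gr, mul_assoc, ← Real.exp_add]
  ring_nf

lemma integrable_F (m c : ℝ) : Integrable (F c) (gaussianReal m 1) := by
  have hmaj : Integrable (fun x => (x - 0) ^ 2 / 2
      + Real.sqrt 2 * rexp (c / 2 * x + (- c ^ 2 / 4))) (gaussianReal m 1) :=
    ((integrable_sq_gr m 0).div_const 2).add (integrable_exp_gen _ _ _ m)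
  refine Integrable.mono' hmaj (F_cont c).aestronglyMeasurable (ae_of_all _ fun x => ?_)
  have := F_abs_bound c x
  rw [Real.norm_eq_abs]
  calc |F c x| ≤ (x - 0) ^ 2 / 2 + Real.sqrt 2 * rexp (c / 2 * x - c ^ 2 / 4) := this
    _ = (x - 0) ^ 2 / 2 + Real.sqrt 2 * rexp (c / 2 * x + (- c ^ 2 / 4)) := by ring_nf

lemma integrable_negsq (m : ℝ) :
    Integrable (fun x : ℝ => -(x - 0) ^ 2 / 2) (gaussianReal m 1) := by
  refine (((integrable_sq_gr m 0).div_const 2).neg).congr (ae_of_all _ fun x => ?_)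
  simp only [Pi.neg_apply]
  ring

lemma integral_negsq (m : ℝ) :
    ∫ x, -(x - 0) ^ 2 / 2 ∂(gaussianReal m 1) = -(m ^ 2 + 1) / 2 := by
  have : ∀ x : ℝ, -(x - 0) ^ 2 / 2 = (-(1/2)) * (x - 0) ^ 2 := fun x => by ring
  simp_rw [this]
  rw [integral_const_mul, integral_sq_gr]
  ring

/-- errors tend to zero -/
lemma err_tendsto (k α β : ℝ) (hβ : β < 0) :
    Tendsto (fun γ : ℝ => k * rexp (α * γ + β * γ ^ 2)) atTop (nhds 0) := by
  have h1 : Tendsto (fun γ : ℝ => α * γ + β * γ ^ 2) atTop atBot := by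
    refine tendsto_atBot_mono' atTop ?_ tendsto_neg_atTop_atBot
    filter_upwards [eventually_ge_atTop ((α + 1) / (-β)), eventually_ge_atTop (0:ℝ)]
      with γ h1 h2
    have key : α + 1 ≤ γ * (-β) := by
      rw [div_le_iff₀ (by linarith : (0:ℝ) < -β)] at h1
      linarith
    nlinarith [mul_le_mul_of_nonneg_right key h2]
  have := (Real.tendsto_exp_atBot.comp h1).const_mul k
  simpa using this

lemma tend_main (R : ℝ) (hR : 0 < R) (m : ℝ) :
    Tendsto (fun γ : ℝ => ∫ x, F (γ * R) x ∂(gaussianReal m 1)) atTop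
      (nhds (-(m ^ 2 + 1) / 2)) := by
  refine tendsto_of_tendsto_of_tendsto_of_le_of_le
    (g := fun _ : ℝ => -(m ^ 2 + 1) / 2)
    (h := fun γ : ℝ => -(m ^ 2 + 1) / 2
      + Real.sqrt 2 * rexp ((m * R / 2) * γ + (-(R ^ 2 / 8)) * γ ^ 2))
    tendsto_const_nhds ?_ ?_ ?_
  · have := (err_tendsto (Real.sqrt 2) (m * R / 2) (-(R ^ 2 / 8)) (by nlinarith)).const_add
      (-(m ^ 2 + 1) / 2)
    simpa using this
  · intro γ
    dsimp only
    rw [← integral_negsq m]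
    exact integral_mono (integrable_negsq m) (integrable_F m (γ * R)) (F_lb1 (γ * R))
  · intro γ
    dsimp only
    have hub : ∫ x, (-(x - 0) ^ 2 / 2
        + Real.sqrt 2 * rexp ((γ * R / 2) * x + (-(γ * R) ^ 2 / 4))) ∂(gaussianReal m 1)
        = -(m ^ 2 + 1) / 2
          + Real.sqrt 2 * rexp ((m * R / 2) * γ + (-(R ^ 2 / 8)) * γ ^ 2) := by
      rw [integral_add (integrable_negsq m) (integrable_exp_gen _ _ _ m),
        integral_negsq, integral_exp_gen]
      congr 2
      ring
    rw [← hub]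
    refine integral_mono (integrable_F m (γ * R))
      ((integrable_negsq m).add (integrable_exp_gen _ _ _ m)) fun x => ?_
    calc F (γ * R) x ≤ -(x - 0) ^ 2 / 2
          + Real.sqrt 2 * rexp ((γ * R) / 2 * x - (γ * R) ^ 2 / 4) := F_ub1 (γ * R) x
      _ = -(x - 0) ^ 2 / 2
          + Real.sqrt 2 * rexp ((γ * R / 2) * x + (-(γ * R) ^ 2 / 4)) := by ring_nf

lemma tend3 (R : ℝ) (hR : 0 < R) :
    Tendsto (fun γ : ℝ => ∫ x, F (γ * R) x ∂(gaussianReal (γ * R) 1)) atTop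
      (nhds (Real.log 2 - 1 / 2)) := by
  have hlow : ∀ c : ℝ, ∫ x, (Real.log 2 + -(x - c) ^ 2 / 2) ∂(gaussianReal c 1)
      = Real.log 2 - 1 / 2 := by
    intro c
    have : ∀ x : ℝ, Real.log 2 + -(x - c) ^ 2 / 2
        = Real.log 2 + (-(1/2)) * (x - c) ^ 2 := fun x => by ring
    simp_rw [this]
    rw [integral_add (integrable_const _) ((integrable_sq_gr c c).const_mul _),
      integral_const, integral_const_mul, integral_sq_gr]
    simp
    ring
  have hlowint : ∀ c : ℝ, Integrable (fun x => Real.log 2 + -(x - c) ^ 2 / 2)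
      (gaussianReal c 1) := by
    intro c
    refine ((integrable_const (Real.log 2)).add ((integrable_sq_gr c c).const_mul
      (-(1/2)))).congr (ae_of_all _ fun x => by simp only [Pi.add_apply]; ring)
  refine tendsto_of_tendsto_of_tendsto_of_le_of_le
    (g := fun _ : ℝ => Real.log 2 - 1 / 2)
    (h := fun γ : ℝ => Real.log 2 - 1 / 2
      + (Real.sqrt 2)⁻¹ * rexp ((0:ℝ) * γ + (-(R ^ 2 / 8)) * γ ^ 2))
    tendsto_const_nhds ?_ ?_ ?_
  · have := (err_tendsto (Real.sqrt 2)⁻¹ 0 (-(R ^ 2 / 8)) (by nlinarith)).const_add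
      (Real.log 2 - 1 / 2)
    simpa using this
  · intro γ
    dsimp only
    rw [← hlow (γ * R)]
    exact integral_mono (hlowint (γ * R)) (integrable_F (γ * R) (γ * R)) (F_lb3 (γ * R))
  · intro γ
    dsimp only
    have hub : ∫ x, (Real.log 2 + -(x - γ * R) ^ 2 / 2
        + (Real.sqrt 2)⁻¹ * rexp ((-(γ * R / 2)) * x + (γ * R) ^ 2 / 4))
          ∂(gaussianReal (γ * R) 1)
        = Real.log 2 - 1 / 2
          + (Real.sqrt 2)⁻¹ * rexp ((0:ℝ) * γ + (-(R ^ 2 / 8)) * γ ^ 2) := by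
      rw [integral_add (hlowint (γ * R)) (integrable_exp_gen _ _ _ _),
        hlow (γ * R), integral_exp_gen]
      congr 2
      ring
    rw [← hub]
    refine integral_mono (integrable_F (γ * R) (γ * R))
      ((hlowint (γ * R)).add (integrable_exp_gen _ _ _ _)) fun x => ?_
    calc F (γ * R) x ≤ Real.log 2 + -(x - γ * R) ^ 2 / 2
          + (Real.sqrt 2)⁻¹ * rexp (-(γ * R / 2) * x + (γ * R) ^ 2 / 4) := F_ub3 (γ * R) x
      _ = _ := by ring_nf

end D

/-- for the 1-d 3-component uniform mixture with true centers
`(-R, R, γR)`, the population log-likelihood at `μ̃ = (0, γR, γR)` tends, as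
`γ → ∞`, to `-(2R² + 3 - 2log 2)/6 - log(3√(2π))`. -/
theorem stmt_12 (R : ℝ) (hR : 0 < R)
    (L : ℝ → ℝ)
    (hL : ∀ γ : ℝ, L γ =
      (1 / 3 : ℝ) *
        ((∫ x, Real.log (Real.exp (-(x - 0) ^ 2 / 2)
            + Real.exp (-(x - γ * R) ^ 2 / 2)
            + Real.exp (-(x - γ * R) ^ 2 / 2)) ∂(gaussianReal (-R) 1))
        + (∫ x, Real.log (Real.exp (-(x - 0) ^ 2 / 2)
            + Real.exp (-(x - γ * R) ^ 2 / 2)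
            + Real.exp (-(x - γ * R) ^ 2 / 2)) ∂(gaussianReal R 1))
        + (∫ x, Real.log (Real.exp (-(x - 0) ^ 2 / 2)
            + Real.exp (-(x - γ * R) ^ 2 / 2)
            + Real.exp (-(x - γ * R) ^ 2 / 2)) ∂(gaussianReal (γ * R) 1)))
      - Real.log (3 * Real.sqrt (2 * Real.pi))) :
    Tendsto L atTop
      (nhds (-(2 * R ^ 2 + 3 - 2 * Real.log 2) / 6
        - Real.log (3 * Real.sqrt (2 * Real.pi)))) := by
  have h1 := tend_main R hR (-R)
  have h2 := tend_main R hR R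
  have h3 := tend3 R hR
  have hmain : Tendsto (fun γ : ℝ =>
      (1 / 3 : ℝ) * ((∫ x, F (γ * R) x ∂(gaussianReal (-R) 1))
        + (∫ x, F (γ * R) x ∂(gaussianReal R 1))
        + (∫ x, F (γ * R) x ∂(gaussianReal (γ * R) 1)))
      - Real.log (3 * Real.sqrt (2 * Real.pi))) atTop
      (nhds ((1 / 3 : ℝ) * ((-((-R) ^ 2 + 1) / 2) + (-(R ^ 2 + 1) / 2)
        + (Real.log 2 - 1 / 2)) - Real.log (3 * Real.sqrt (2 * Real.pi)))) :=
    (((h1.add h2).add h3).const_mul (1 / 3 : ℝ)).sub_const _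
  have heq : (1 / 3 : ℝ) * ((-((-R) ^ 2 + 1) / 2) + (-(R ^ 2 + 1) / 2)
        + (Real.log 2 - 1 / 2)) - Real.log (3 * Real.sqrt (2 * Real.pi))
      = -(2 * R ^ 2 + 3 - 2 * Real.log 2) / 6 - Real.log (3 * Real.sqrt (2 * Real.pi)) := by
    ring
  rw [heq] at hmain
  exact hmain.congr fun γ => (hL γ).symm
end
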